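/- Let F ⊆ V×V be a loop-free arc set with |F| ≤ k such that (G△F, σ) is a BMG. Then every vertex s ∈ S has in-arcs in G△F from at most one of the sets X_1, …, X_m. -/

import Mathlib

/-- A rooted phylogenetic tree with leaf set `V`, encoded by its hierarchy of clusters
(the cluster of a vertex is the set of leaves below it; inner vertices of a phylogenetic
tree have at least two children, so vertices correspond bijectively to clusters). -/
structure PhyloTree (V : Type*) where
  clusters : Set (Set V)
  nonempty_of_mem : ∀ A ∈ clusters, A.Nonempty
  univ_mem : Set.univ ∈ clusters
  singleton_mem : ∀ v : V, {v} ∈ clusters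
  nested : ∀ A ∈ clusters, ∀ B ∈ clusters, A ⊆ B ∨ B ⊆ A ∨ Disjoint A B

namespace PhyloTree

variable {V : Type*}

/-- The cluster of the last common ancestor of `x` and `y`: the smallest cluster
containing both (the clusters containing `x` and `y` form a chain, so their
intersection is the smallest one). -/
def lca (T : PhyloTree V) (x y : V) : Set V :=
  ⋂₀ {A | A ∈ T.clusters ∧ x ∈ A ∧ y ∈ A}

/-- The rooted triple `xy|z` (on three pairwise distinct leaves) is displayed by `T`:
`lca(x,y) ≺ lca(x,z) = lca(y,z)`. -/
def Displays (T : PhyloTree V) (x y z : V) : Prop :=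
  x ≠ y ∧ x ≠ z ∧ y ≠ z ∧ T.lca x y ⊂ T.lca x z ∧ T.lca x z = T.lca y z

/-- `T` displays every triple of `R`; a triple `(x, y, z)` encodes `xy|z`. -/
def DisplaysSet (T : PhyloTree V) (R : Set (V × V × V)) : Prop :=
  ∀ t ∈ R, T.Displays t.1 t.2.1 t.2.2

/-- `r(T)`, the set of triples displayed by `T`. -/
def triples (T : PhyloTree V) : Set (V × V × V) :=
  {t | T.Displays t.1 t.2.1 t.2.2}

/-- `T` is binary: every inner vertex (cluster with at least two leaves) has exactly
two children, i.e. splits into two disjoint proper subclusters. -/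
def IsBinary (T : PhyloTree V) : Prop :=
  ∀ A ∈ T.clusters, 1 < A.ncard →
    ∃ B ∈ T.clusters, ∃ D ∈ T.clusters,
      Disjoint B D ∧ B ∪ D = A ∧ B ⊂ A ∧ D ⊂ A

/-- `T'` is a refinement of `T`: they have the same leaf set and `T` is obtained from
`T'` by contracting inner edges, i.e. every cluster of `T` is a cluster of `T'`. -/
def Refines (T' T : PhyloTree V) : Prop :=
  T.clusters ⊆ T'.clusters

end PhyloTree

section BMG

variable {V C : Type*}

/-- `y` is a best match of `x` in the leaf-colored tree `(T,σ)`. -/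
def bestMatch (T : PhyloTree V) (σ : V → C) (x y : V) : Prop :=
  σ x ≠ σ y ∧ ∀ y' : V, σ y' = σ y → T.lca x y ⊆ T.lca x y'

/-- The leaf-colored tree `(T,σ)` explains the vertex-colored digraph `(E,σ)`,
i.e. `(E,σ)` is the best match graph of `(T,σ)`. -/
def Explains (T : PhyloTree V) (σ : V → C) (E : V → V → Prop) : Prop :=
  ∀ x y, E x y ↔ bestMatch T σ x y

/-- `(E,σ)` is a best match graph. -/
def IsBMG (E : V → V → Prop) (σ : V → C) : Prop :=
  ∃ T : PhyloTree V, Explains T σ E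

/-- `(E,σ)` is binary-explainable. -/
def BinaryExplainable (E : V → V → Prop) (σ : V → C) : Prop :=
  ∃ T : PhyloTree V, T.IsBinary ∧ Explains T σ E

/-- The informative triples `R(G,σ)`: `(a,b,b')` encodes `ab|b'`. -/
def informativeTriples (E : V → V → Prop) (σ : V → C) : Set (V × V × V) :=
  {t | σ t.1 ≠ σ t.2.1 ∧ σ t.2.1 = σ t.2.2 ∧ E t.1 t.2.1 ∧ ¬ E t.1 t.2.2}

/-- The forbidden triples `F(G,σ)`: `(a,b,b')` encodes `ab|b'`. -/
def forbiddenTriples (E : V → V → Prop) (σ : V → C) : Set (V × V × V) :=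
  {t | σ t.1 ≠ σ t.2.1 ∧ σ t.2.1 = σ t.2.2 ∧ t.2.1 ≠ t.2.2 ∧ E t.1 t.2.1 ∧ E t.1 t.2.2}

/-- The extended triple set `R^bin(G,σ) = R(G,σ) ∪ {bb'|a : ab|b' ∈ F(G,σ)}`. -/
def Rbin (E : V → V → Prop) (σ : V → C) : Set (V × V × V) :=
  informativeTriples E σ ∪ {t | (t.2.2, t.1, t.2.1) ∈ forbiddenTriples E σ}

/-- Properly colored: arcs only between vertices of distinct colors. -/
def ProperlyColored (E : V → V → Prop) (σ : V → C) : Prop :=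
  ∀ x y, E x y → σ x ≠ σ y

/-- sf-colored: properly colored and every vertex has, for each color (of the graph)
different from its own, at least one out-neighbor of that color. -/
def SfColored (E : V → V → Prop) (σ : V → C) : Prop :=
  ProperlyColored E σ ∧ ∀ x y : V, σ y ≠ σ x → ∃ z, E x z ∧ σ z = σ y

/-- A triple set is consistent if some tree displays all of its triples. -/
def Consistent (R : Set (V × V × V)) : Prop :=
  ∃ T : PhyloTree V, T.DisplaysSet R

/-- The closure `cl(R)`: all triples displayed by every tree displaying `R`. -/
def tripleClosure (R : Set (V × V × V)) : Set (V × V × V) :=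
  {t | ∀ T : PhyloTree V, T.DisplaysSet R → T.Displays t.1 t.2.1 t.2.2}

/-- `(T,σ)` is a least resolved tree for `(E,σ)`: it explains `(E,σ)` and no tree
obtained from it by contracting an edge (i.e. by removing a non-root inner cluster)
explains `(E,σ)`. -/
def IsLRT (T : PhyloTree V) (σ : V → C) (E : V → V → Prop) : Prop :=
  Explains T σ E ∧
    ∀ A ∈ T.clusters, A ≠ Set.univ → 1 < A.ncard →
      ∀ T' : PhyloTree V, T'.clusters = T.clusters \ {A} → ¬ Explains T' σ E

end BMG

section Aho

variable {V : Type*}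

/-- Adjacency in the Aho graph `[R,L]`: `x` and `y` are joined whenever `xy|z ∈ R`
for some `z ∈ L` (only triples with all leaves in `L` are taken into account). -/
def ahoAdj (R : Set (V × V × V)) (L : Set V) (x y : V) : Prop :=
  x ∈ L ∧ y ∈ L ∧ ∃ z ∈ L, (x, y, z) ∈ R ∨ (y, x, z) ∈ R

/-- The vertex set of the connected component of `x` in the Aho graph `[R,L]`. -/
def ahoComponent (R : Set (V × V × V)) (L : Set V) (x : V) : Set V :=
  {y | Relation.ReflTransGen (ahoAdj R L) x y}

/-- The clusters of the Aho tree `Aho(R, V)`: the full leaf set, and recursively the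
connected components of the Aho graphs. -/
inductive IsAhoCluster (R : Set (V × V × V)) : Set V → Prop
  | univ : IsAhoCluster R Set.univ
  | component {L : Set V} {x : V} :
      IsAhoCluster R L → x ∈ L → IsAhoCluster R (ahoComponent R L x)

/-- `T` is the Aho tree (`BUILD` tree) of the triple set `R` on the full leaf set. -/
def IsAhoTree (R : Set (V × V × V)) (T : PhyloTree V) : Prop :=
  T.clusters = {A | IsAhoCluster R A}

/-- The union of the leaf sets of the triples in `R`. -/
def tripleLeaves (R : Set (V × V × V)) : Set V :=
  {v | ∃ t ∈ R, v = t.1 ∨ v = t.2.1 ∨ v = t.2.2}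

end Aho

/-! ### The reduction from Exact 3-Cover (X3C)

Given an X3C instance, a set `𝔖` with `|𝔖| = 3t` and a collection `𝒞 = {C_1,…,C_m}`
of 3-element subsets of `𝔖`, set `r = 18t²`, `k = 6r(m−t) + r − 18t` and `q = 3k`.
The constructed 2-colored digraph `(G,σ)` (colors: black = `true`, white = `false`)
has vertex set `S ⊍ (X_1 ⊍ ⋯ ⊍ X_m) ⊍ (Y_1 ⊍ ⋯ ⊍ Y_m)`, where `S` contains a black and
a white copy of each `s ∈ 𝔖`, each `X_i` has `r` black and `r` white vertices and each
`Y_i` has `q` black and `q` white vertices. -/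

/-- The vertex set of the reduction graph. -/
abbrev Vred (SS : Type*) (m r q : ℕ) : Type _ :=
  (SS × Bool) ⊕ ((Fin m × Fin r × Bool) ⊕ (Fin m × Fin q × Bool))

/-- The coloring of the reduction graph (black = `true`, white = `false`). -/
def sigmaRed {SS : Type*} {m r q : ℕ} : Vred SS m r q → Bool
  | Sum.inl (_, c) => c
  | Sum.inr (Sum.inl (_, _, c)) => c
  | Sum.inr (Sum.inr (_, _, c)) => c

/-- The set `S` of vertices of the reduction graph. -/
def Sset {SS : Type*} {m r q : ℕ} : Set (Vred SS m r q) :=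
  Set.range Sum.inl

/-- The set `X_i` of vertices of the reduction graph. -/
def Xset {SS : Type*} {m r q : ℕ} (i : Fin m) : Set (Vred SS m r q) :=
  {v | ∃ p c, v = Sum.inr (Sum.inl (i, p, c))}

/-- The set `Y_i` of vertices of the reduction graph. -/
def Yset {SS : Type*} {m r q : ℕ} (i : Fin m) : Set (Vred SS m r q) :=
  {v | ∃ p c, v = Sum.inr (Sum.inr (i, p, c))}

/-- The arc set of the reduction graph: both arcs between every black and every white
vertex of `S`; all arcs from black to white vertices within each `X_i`; both arcs
between every black and every white vertex within each `Y_i`; all arcs `(x,y)` with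
`x ∈ X_i`, `y ∈ Y_i` of distinct colors; and for each `i` and each `s ∈ C_i` the arcs
`(x, s_b)` for white `x ∈ X_i` and `(x, s_w)` for black `x ∈ X_i`. -/
def Ered {SS : Type*} {m r q : ℕ} (𝒞 : Fin m → Finset SS) :
    Set (Vred SS m r q × Vred SS m r q) :=
  {p | match p with
    | (Sum.inl (_, c), Sum.inl (_, c')) => c ≠ c'
    | (Sum.inr (Sum.inl (i, _, c)), Sum.inr (Sum.inl (i', _, c'))) =>
        i = i' ∧ c = true ∧ c' = false
    | (Sum.inr (Sum.inr (i, _, c)), Sum.inr (Sum.inr (i', _, c'))) => i = i' ∧ c ≠ c'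
    | (Sum.inr (Sum.inl (i, _, c)), Sum.inr (Sum.inr (j, _, c'))) => i = j ∧ c ≠ c'
    | (Sum.inr (Sum.inl (i, _, c)), Sum.inl (s, c')) => s ∈ 𝒞 i ∧ c ≠ c'
    | _ => False}

/-- `r = 18t²`. -/
def rr (t : ℕ) : ℕ := 18 * t ^ 2

/-- `k = 6r(m−t) + r − 18t`. -/
def kk (t m : ℕ) : ℕ := 6 * rr t * (m - t) + rr t - 18 * t

/-- `q = 3·(6r(m−t) + r − 18t)`. -/
def qq (t m : ℕ) : ℕ := 3 * kk t m

/-- The X3C instance `(𝔖, 𝒞)` has an exact 3-cover: a subcollection `𝒞' ⊆ 𝒞` with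
`|𝒞'| = t` whose union is `𝔖`. -/
def HasExact3Cover {SS : Type*} {m : ℕ} (t : ℕ) (𝒞 : Fin m → Finset SS) : Prop :=
  ∃ I : Finset (Fin m), I.card = t ∧ ∀ s : SS, ∃ i ∈ I, s ∈ 𝒞 i

/-
If `s ∈ S` had in-arcs from `x ∈ X_i` and `x' ∈ X_j` with `i ≠ j`, pick `y ∈ Y_i` and
`y' ∈ Y_j` of the colour of `s`; since `|Y_i| = q = 3k > 2|F|`, they can be chosen so that
`F` touches none of the arcs between `{x, x'}` and `{y, y'}`. Then `G △ F` contains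
`x → y`, `x' → y'` but neither `x' → y` nor `x → y'`. In any tree, however, `y` lies below
`lca(x, s)` and `y'` below `lca(x', s)`, and these two clusters both contain `s`, hence are
nested; whichever is smaller forces one of the two missing arcs.
-/

namespace PhyloTree

variable {V : Type*}

theorem lca_subset_of_mem {T : PhyloTree V} {A : Set V} (hA : A ∈ T.clusters) {x y : V}
    (hx : x ∈ A) (hy : y ∈ A) : T.lca x y ⊆ A :=
  Set.sInter_subset_of_mem ⟨hA, hx, hy⟩

theorem subset_or_subset_of_mem {T : PhyloTree V} {A B : Set V} (hA : A ∈ T.clusters)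
    (hB : B ∈ T.clusters) {v : V} (hvA : v ∈ A) (hvB : v ∈ B) : A ⊆ B ∨ B ⊆ A := by
  rcases T.nested A hA B hB with h | h | h
  · exact .inl h
  · exact .inr h
  · exact absurd hvB (Set.disjoint_left.mp h hvA)

variable [Finite V]

/-- On a finite leaf set the clusters containing `x` and `y` form a finite chain, so their
intersection is the least of them. -/
theorem lca_spec (T : PhyloTree V) (x y : V) :
    T.lca x y ∈ T.clusters ∧ x ∈ T.lca x y ∧ y ∈ T.lca x y := by
  obtain ⟨A, hA, hmin⟩ := Set.Finite.exists_minimalFor id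
    {A | A ∈ T.clusters ∧ x ∈ A ∧ y ∈ A} (Set.toFinite _) ⟨Set.univ, T.univ_mem, trivial, trivial⟩
  have hleast : ∀ B ∈ {A | A ∈ T.clusters ∧ x ∈ A ∧ y ∈ A}, A ⊆ B := fun B hB =>
    (subset_or_subset_of_mem hA.1 hB.1 hA.2.1 hB.2.1).elim id (hmin hB)
  rwa [show T.lca x y = A from
    subset_antisymm (Set.sInter_subset_of_mem hA) (Set.subset_sInter hleast)]

theorem lca_mem_clusters (T : PhyloTree V) (x y : V) : T.lca x y ∈ T.clusters :=
  (lca_spec T x y).1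

theorem mem_lca_left (T : PhyloTree V) (x y : V) : x ∈ T.lca x y :=
  (lca_spec T x y).2.1

theorem mem_lca_right (T : PhyloTree V) (x y : V) : y ∈ T.lca x y :=
  (lca_spec T x y).2.2

end PhyloTree

section BestMatch

variable {V C : Type*} {T : PhyloTree V} {σ : V → C} {x y z : V}

theorem bestMatch.mem_lca [Finite V] (hy : bestMatch T σ x y) (hz : σ z = σ y) :
    y ∈ T.lca x z :=
  hy.2 z hz (T.mem_lca_right x y)

theorem bestMatch.of_lca_subset (hy : bestMatch T σ x y) (hz : σ z = σ y)
    (hsub : T.lca x z ⊆ T.lca x y) : bestMatch T σ x z :=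
  ⟨hz ▸ hy.1, fun z' hz' => hsub.trans (hy.2 z' (hz'.trans hz))⟩

theorem bestMatch.of_mem_lca [Finite V] (hy : bestMatch T σ x y) (hz : σ z = σ y)
    (hmem : z ∈ T.lca x y) : bestMatch T σ x z :=
  hy.of_lca_subset hz <|
    PhyloTree.lca_subset_of_mem (T.lca_mem_clusters x y) (T.mem_lca_left x y) hmem

end BestMatch

section BMG

variable {V C : Type*} {E : V → V → Prop} {σ : V → C}

theorem IsBMG.properlyColored (h : IsBMG E σ) : ProperlyColored E σ := by
  obtain ⟨T, hT⟩ := h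
  exact fun x y hxy => ((hT x y).1 hxy).1

theorem IsBMG.adj_or_adj_of_common_out_neighbor [Finite V] (h : IsBMG E σ) {x x' s y y' : V}
    (hxs : E x s) (hx's : E x' s) (hy : σ y = σ s) (hy' : σ y' = σ s) (hxy : E x y)
    (hx'y' : E x' y') : E x' y ∨ E x y' := by
  obtain ⟨T, hT⟩ := h
  have bxs := (hT x s).1 hxs
  have bx's := (hT x' s).1 hx's
  have hyx : y ∈ T.lca x s := ((hT x y).1 hxy).mem_lca hy.symm
  have hy'x' : y' ∈ T.lca x' s := ((hT x' y').1 hx'y').mem_lca hy'.symm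
  rcases PhyloTree.subset_or_subset_of_mem (T.lca_mem_clusters x s) (T.lca_mem_clusters x' s)
    (T.mem_lca_right x s) (T.mem_lca_right x' s) with hsub | hsub
  · exact .inl <| (hT x' y).2 <| bx's.of_mem_lca hy (hsub hyx)
  · exact .inr <| (hT x y').2 <| bxs.of_mem_lca hy' (hsub hy'x')

end BMG

theorem exists_pair_notMem_of_two_mul_ncard_lt {α β ι : Type*} [Finite ι] {F : Set (α × β)}
    (hF : F.Finite) {f : ι → β} (hf : Function.Injective f) (a a' : α)
    (h : 2 * F.ncard < Nat.card ι) : ∃ i, (a, f i) ∉ F ∧ (a', f i) ∉ F := by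
  have hfiber (b : α) : {i | (b, f i) ∈ F}.ncard ≤ F.ncard :=
    Set.ncard_le_ncard_of_injOn (fun i => (b, f i)) (fun _ hi => hi)
      (fun _ _ _ _ hij => hf (congrArg Prod.snd hij)) hF
  by_contra! hall
  have hcover : Set.univ ⊆ {i | (a, f i) ∈ F} ∪ {i | (a', f i) ∈ F} := fun i _ =>
    (em ((a, f i) ∈ F)).elim .inl fun ha => .inr (hall i ha)
  have hle := (Set.ncard_le_ncard hcover).trans (Set.ncard_union_le _ _)
  rw [Set.ncard_univ] at hle
  linarith [hfiber a, hfiber a']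

theorem one_le_kk {t m : ℕ} (ht : 1 ≤ t) (hm : 2 ≤ m) : 1 ≤ kk t m := by
  unfold kk rr
  rcases Nat.lt_or_ge t 2 with ht1 | ht2
  · obtain rfl : t = 1 := by omega
    omega
  · have : 2 * t ≤ t ^ 2 := by nlinarith
    omega

theorem stmt16_general {SS : Type*} [Fintype SS] (t m : ℕ)
    (hcard : Fintype.card SS = 3 * t)
    (𝒞 : Fin m → Finset SS)
    (F : Set (Vred SS m (rr t) (qq t m) × Vred SS m (rr t) (qq t m)))
    (hF : F.ncard ≤ kk t m)
    (hbmg : IsBMG (fun u v => (u, v) ∈ symmDiff (Ered 𝒞) F) sigmaRed) :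
    ∀ (s : Vred SS m (rr t) (qq t m)), s ∈ Sset →
      ∀ (i j : Fin m) (x x' : Vred SS m (rr t) (qq t m)),
        x ∈ Xset i → x' ∈ Xset j →
        (x, s) ∈ symmDiff (Ered 𝒞) F → (x', s) ∈ symmDiff (Ered 𝒞) F → i = j := by
  rintro _ ⟨⟨a, c⟩, rfl⟩ i j _ _ ⟨p, cx, rfl⟩ ⟨p', cx', rfl⟩ hxs hx's
  by_contra hij
  have ht : 1 ≤ t := by
    have := Fintype.card_pos_iff.mpr ⟨a⟩
    omega
  have hm : 2 ≤ m := by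
    have := Fin.val_ne_of_ne hij
    omega
  have hq : 2 * F.ncard < Nat.card (Fin (qq t m)) := by
    have hqk : 3 * kk t m ≤ qq t m := le_rfl
    have := one_le_kk ht hm
    rw [Nat.card_fin]
    omega
  have hY (l : Fin m) : Function.Injective
      fun p : Fin (qq t m) => (Sum.inr (Sum.inr (l, p, c)) : Vred SS m (rr t) (qq t m)) :=
    fun _ _ h => by simpa using h
  obtain ⟨py, hxy, hx'y⟩ := exists_pair_notMem_of_two_mul_ncard_lt F.toFinite (hY i) _ _ hq
  obtain ⟨py', hx'y', hxy'⟩ := exists_pair_notMem_of_two_mul_ncard_lt F.toFinite (hY j) _ _ hq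
  have hcx : cx ≠ c := hbmg.properlyColored _ _ hxs
  have hcx' : cx' ≠ c := hbmg.properlyColored _ _ hx's
  rcases hbmg.adj_or_adj_of_common_out_neighbor (y := .inr (.inr (i, py, c)))
      (y' := .inr (.inr (j, py', c))) hxs hx's rfl rfl
      (Set.mem_symmDiff.mpr (.inl ⟨⟨rfl, hcx⟩, hxy⟩))
      (Set.mem_symmDiff.mpr (.inl ⟨⟨rfl, hcx'⟩, hx'y'⟩)) with h | h
  · rcases Set.mem_symmDiff.mp h with ⟨⟨hji, -⟩, -⟩ | ⟨hF', -⟩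
    exacts [hij hji.symm, hx'y hF']
  · rcases Set.mem_symmDiff.mp h with ⟨⟨hij', -⟩, -⟩ | ⟨hF', -⟩
    exacts [hij hij', hxy' hF']

/-- Claim: at-most-one-Xi.
Let `F ⊆ V×V` be a loop-free arc set with `|F| ≤ k` such that `(G△F, σ)` is a BMG.
Then every vertex `s ∈ S` has in-arcs in `G△F` from at most one of the sets
`X_1, …, X_m`. -/
theorem stmt16 {SS : Type*} [Fintype SS] [DecidableEq SS] (t m : ℕ)
    (hcard : Fintype.card SS = 3 * t)
    (𝒞 : Fin m → Finset SS) (h𝒞 : ∀ i, (𝒞 i).card = 3)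
    (F : Set (Vred SS m (rr t) (qq t m) × Vred SS m (rr t) (qq t m)))
    (hloop : ∀ v, (v, v) ∉ F) (hF : F.ncard ≤ kk t m)
    (hbmg : IsBMG (fun u v => (u, v) ∈ symmDiff (Ered 𝒞) F) sigmaRed) :
    ∀ (s : Vred SS m (rr t) (qq t m)), s ∈ Sset →
      ∀ (i j : Fin m) (x x' : Vred SS m (rr t) (qq t m)),
        x ∈ Xset i → x' ∈ Xset j →
        (x, s) ∈ symmDiff (Ered 𝒞) F → (x', s) ∈ symmDiff (Ered 𝒞) F → i = j :=
  stmt16_general t m hcard 𝒞 F hF hbmg
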